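/- (Hessian operator identity) For F∈C^∞ on the interior of the probability simplex and zero-sum σ₁,σ₂, the Riemannian Hessian of the Wasserstein metric satisfies Hess_W F(ρ)(σ₁,σ₂) = σ₁ᵀ d²_ρF(ρ) σ₂ + (1/2){ d_ρF(ρ)ᵀL(σ₁)L(ρ)^†σ₂ + d_ρF(ρ)ᵀL(σ₂)L(ρ)^†σ₁ − d_ρF(ρ)ᵀL(ρ)(∇_GL(ρ)^†σ₁ ∘ ∇_GL(ρ)^†σ₂) }, where Hess_W F(σ₁,σ₂)=σ₂(g_W(σ₁,∇_WF)) − g_W(∇^W_{σ₂}σ₁, ∇_WF). -/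

import Mathlib

open Matrix

/-- Discrete gradient matrix `D ∈ ℝ^{|E|×n}` with entries `±√ω_{ij}`. -/
noncomputable def gradMat {n : ℕ} {E : Type} (sE tE : E → Fin n) (w : E → ℝ) :
    Matrix E (Fin n) ℝ :=
  fun e k => if k = sE e then Real.sqrt (w e) else if k = tE e then -Real.sqrt (w e) else 0

/-- Weighted graph Laplacian `L(a) = Dᵀ Θ(a) D` with `Θ(a)` diagonal with entries
`(a_i + a_j)/2` on edges. -/
noncomputable def Lw {n : ℕ} {E : Type} [Fintype E] [DecidableEq E] (sE tE : E → Fin n) (w : E → ℝ)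
    (a : Fin n → ℝ) : Matrix (Fin n) (Fin n) ℝ :=
  (gradMat sE tE w)ᵀ * Matrix.diagonal (fun e => (a (sE e) + a (tE e)) / 2) * gradMat sE tE w

/-- `B` is the Moore–Penrose pseudoinverse of `A` (the four Penrose conditions). -/
def IsPInv {n : ℕ} (A B : Matrix (Fin n) (Fin n) ℝ) : Prop :=
  A * B * A = A ∧ B * A * B = B ∧ (A * B)ᵀ = A * B ∧ (B * A)ᵀ = B * A

/-- Vertex-wise circle product of the gradient fields of two potentials:
`(∇_GΦ ∘ ∇_GΨ)_i = (1/2)·Σ_{j ∈ N(i)} ω_{ij}(Φ_i − Φ_j)(Ψ_i − Ψ_j)`. -/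
noncomputable def circ {n : ℕ} {E : Type} [Fintype E] (sE tE : E → Fin n) (w : E → ℝ)
    (Φ Ψ : Fin n → ℝ) : Fin n → ℝ :=
  fun i => (1 / 2) *
    ∑ e : E, (if sE e = i ∨ tE e = i then
      w e * (Φ (sE e) - Φ (tE e)) * (Ψ (sE e) - Ψ (tE e)) else 0)

/-- The normalized all-ones vector `u₀ = (1/√n)(1,…,1)ᵀ`. -/
noncomputable def onesVec (n : ℕ) : Fin n → ℝ := fun _ => 1 / Real.sqrt n

/-!
Two observations reduce the identity to linear algebra. Every Laplacian `L(a)` annihilates the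
constants (the quadratic form of `L(ρ)` is a positively weighted sum of squares of the gradient, so
`ker L(ρ) = constants` forces the gradient to vanish on constants), so a left inverse `G` of `L(ρ + tσ₂) + u₀u₀ᵀ` satisfies `G L(ρ + tσ₂) = 1 - u₀u₀ᵀ`;
against the zero-sum `σ₁` the pairing `g_W(σ₁, ∇_W F)` is therefore just `σ₁ᵀ dF(ρ + tσ₂)`, whose
derivative at `t = 0` is `σ₁ᵀ H σ₂`. Moreover `L(ρ)^† L(ρ)` differs from the identity only by a map
into the constants, which is invisible against the zero-sum vectors `L(a) y`; this turns each term
of `g_W(∇^W_{σ₂}σ₁, ∇_W F)` into `dFᵀ L(a) y`.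
-/

theorem HasDerivAt.const_dotProduct {ι : Type*} [Fintype ι] {f : ℝ → ι → ℝ} {f' : ι → ℝ} {x : ℝ}
    (hf : HasDerivAt f f' x) (v : ι → ℝ) : HasDerivAt (fun t => v ⬝ᵥ f t) (v ⬝ᵥ f') x :=
  HasDerivAt.fun_sum fun i _ => (hasDerivAt_pi.1 hf i).const_mul (v i)

theorem mul_eq_one_sub_of_mul_add_eq_one {R : Type*} [Ring R] {G L P : R}
    (h : G * (L + P) = 1) (hLP : L * P = 0) (hP : P * P = P) : G * L = 1 - P := by
  have hL : (L + P) * (1 - P) = L := by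
    rw [add_mul, mul_sub, mul_sub, hLP, hP]; simp
  rw [← hL, ← mul_assoc, h, one_mul]

namespace Matrix

variable {ι : Type*} [Fintype ι]

theorem dotProduct_vecMulVec_mulVec_eq_zero {x u v : ι → ℝ} (hx : x ⬝ᵥ u = 0) (y : ι → ℝ) :
    x ⬝ᵥ (vecMulVec u v *ᵥ y) = 0 := by
  rw [dotProduct_mulVec, vecMul_vecMulVec, hx, zero_smul, zero_dotProduct]

theorem dotProduct_mulVec_mulVec_of_mul_mul_eq_self {L B : Matrix ι ι ℝ}
    (hLBL : L * B * L = L) (hker : ∀ v, L *ᵥ v = 0 → ∃ c : ℝ, ∀ i, v i = c)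
    {x : ι → ℝ} (hx : ∑ i, x i = 0) (d : ι → ℝ) : x ⬝ᵥ (B *ᵥ (L *ᵥ d)) = x ⬝ᵥ d := by
  obtain ⟨c, hc⟩ := hker (d - B *ᵥ (L *ᵥ d)) (by
    rw [mulVec_sub, mulVec_mulVec, mulVec_mulVec, hLBL, sub_self])
  have hconst : d - B *ᵥ (L *ᵥ d) = c • 1 := funext fun i => by simpa using hc i
  have hx0 : x ⬝ᵥ (d - B *ᵥ (L *ᵥ d)) = 0 := by
    rw [hconst, dotProduct_smul, dotProduct_one, hx, smul_zero]
  rw [dotProduct_sub] at hx0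
  linarith

end Matrix

theorem onesVec_dotProduct_self {n : ℕ} (hn : n ≠ 0) : onesVec n ⬝ᵥ onesVec n = 1 := by
  have : (0 : ℝ) < n := by positivity
  simp [onesVec, dotProduct, ← mul_inv, Real.mul_self_sqrt this.le, this.ne']

section GraphLaplacian

variable {n : ℕ} {E : Type} [Fintype E] [DecidableEq E] (sE tE : E → Fin n) (w : E → ℝ)

theorem Lw_mulVec (a v : Fin n → ℝ) :
    Lw sE tE w a *ᵥ v = (gradMat sE tE w)ᵀ *ᵥ
      ((fun e => (a (sE e) + a (tE e)) / 2) * (gradMat sE tE w *ᵥ v)) := by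
  rw [Lw, ← mulVec_mulVec, ← mulVec_mulVec]
  congr 1
  funext e
  exact mulVec_diagonal _ _ e

theorem dotProduct_Lw_mulVec (a v : Fin n → ℝ) :
    v ⬝ᵥ (Lw sE tE w a *ᵥ v) =
      ∑ e, (a (sE e) + a (tE e)) / 2 * (gradMat sE tE w *ᵥ v) e ^ 2 := by
  rw [Lw_mulVec, dotProduct_mulVec, vecMul_transpose, dotProduct]
  exact Finset.sum_congr rfl fun e _ => by simp only [Pi.mul_apply]; ring

theorem gradMat_mulVec_eq_zero_of_Lw_mulVec_eq_zero {a v : Fin n → ℝ}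
    (ha : ∀ e, 0 < a (sE e) + a (tE e)) (hv : Lw sE tE w a *ᵥ v = 0) :
    gradMat sE tE w *ᵥ v = 0 := by
  have hsum := dotProduct_Lw_mulVec sE tE w a v
  rw [hv, dotProduct_zero, eq_comm,
    Finset.sum_eq_zero_iff_of_nonneg fun e _ => by have := ha e; positivity] at hsum
  funext e
  simpa [(ha e).ne'] using hsum e (Finset.mem_univ e)

theorem Lw_mulVec_eq_zero_of_gradMat_mulVec_eq_zero {v : Fin n → ℝ}
    (hv : gradMat sE tE w *ᵥ v = 0) (a : Fin n → ℝ) : Lw sE tE w a *ᵥ v = 0 := by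
  rw [Lw_mulVec, hv, mul_zero, mulVec_zero]

theorem sum_Lw_mulVec_eq_zero (hD : gradMat sE tE w *ᵥ 1 = 0) (a y : Fin n → ℝ) :
    ∑ i, (Lw sE tE w a *ᵥ y) i = 0 := by
  rw [← one_dotProduct, Lw_mulVec, dotProduct_mulVec, vecMul_transpose, hD, zero_dotProduct]

theorem dotProduct_mulVec_Lw_mulVec_of_mul_eq_one {G : Matrix (Fin n) (Fin n) ℝ}
    {a u σ : Fin n → ℝ} (hG : G * (Lw sE tE w a + vecMulVec u u) = 1)
    (hu : gradMat sE tE w *ᵥ u = 0) (huu : u ⬝ᵥ u = 1) (hσ : σ ⬝ᵥ u = 0) (d : Fin n → ℝ) :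
    σ ⬝ᵥ (G *ᵥ (Lw sE tE w a *ᵥ d)) = σ ⬝ᵥ d := by
  have hGL : G * Lw sE tE w a = 1 - vecMulVec u u :=
    mul_eq_one_sub_of_mul_add_eq_one hG
      (by rw [mul_vecMulVec, Lw_mulVec_eq_zero_of_gradMat_mulVec_eq_zero sE tE w hu,
        zero_vecMulVec])
      (by rw [vecMulVec_mul_vecMulVec, huu, one_smul])
  rw [mulVec_mulVec, hGL, sub_mulVec, one_mulVec, dotProduct_sub,
    dotProduct_vecMulVec_mulVec_eq_zero hσ, sub_zero]

end GraphLaplacian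

theorem wasserstein_hessian_identity_general
    {n : ℕ} {E : Type} [Fintype E] [DecidableEq E]
    (sE tE : E → Fin n) (w : E → ℝ)
    (ρ : Fin n → ℝ) (hρ : ∀ i, 0 < ρ i) (hsum : ∑ i, ρ i = 1)
    (Ldag : Matrix (Fin n) (Fin n) ℝ) (hpinv : IsPInv (Lw sE tE w ρ) Ldag)
    (hker : ∀ Φ : Fin n → ℝ, Lw sE tE w ρ *ᵥ Φ = 0 ↔ ∃ c : ℝ, ∀ i, Φ i = c)
    (dF : (Fin n → ℝ) → Fin n → ℝ)
    (σ₁ σ₂ : Fin n → ℝ) (h1 : ∑ i, σ₁ i = 0)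
    (H : Matrix (Fin n) (Fin n) ℝ)
    -- H is the Euclidean Hessian of F at ρ: the derivative of dF in direction σ₂ is Hσ₂
    (hH : HasDerivAt (fun t : ℝ => dF (ρ + t • σ₂)) (H *ᵥ σ₂) 0)
    (Gdir : ℝ → Matrix (Fin n) (Fin n) ℝ) (ε : ℝ) (hε : 0 < ε)
    -- Gdir t = g(ρ + tσ₂) is the inverse of L(ρ+tσ₂)+u₀u₀ᵀ, i.e. L(ρ+tσ₂)^†+u₀u₀ᵀ
    (hGdir : ∀ t : ℝ, |t| < ε →
      Gdir t * (Lw sE tE w (ρ + t • σ₂) + vecMulVec (onesVec n) (onesVec n)) = 1 ∧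
      (Lw sE tE w (ρ + t • σ₂) + vecMulVec (onesVec n) (onesVec n)) * Gdir t = 1) :
    -- Hess_W F(σ₁,σ₂) = σ₂(g_W(σ₁,∇_WF)) − g_W(∇^W_{σ₂}σ₁, ∇_WF)
    deriv (fun t : ℝ => σ₁ ⬝ᵥ (Gdir t *ᵥ
        (Lw sE tE w (ρ + t • σ₂) *ᵥ dF (ρ + t • σ₂)))) 0 -
      (-(1/2 : ℝ) • (Lw sE tE w σ₂ *ᵥ (Ldag *ᵥ σ₁) + Lw sE tE w σ₁ *ᵥ (Ldag *ᵥ σ₂)) +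
        (1/2 : ℝ) • (Lw sE tE w ρ *ᵥ circ sE tE w (Ldag *ᵥ σ₁) (Ldag *ᵥ σ₂)))
        ⬝ᵥ (Ldag *ᵥ (Lw sE tE w ρ *ᵥ dF ρ)) =
    σ₁ ⬝ᵥ (H *ᵥ σ₂) +
      (1/2 : ℝ) * (dF ρ ⬝ᵥ (Lw sE tE w σ₁ *ᵥ (Ldag *ᵥ σ₂)) +
        dF ρ ⬝ᵥ (Lw sE tE w σ₂ *ᵥ (Ldag *ᵥ σ₁)) -
        dF ρ ⬝ᵥ (Lw sE tE w ρ *ᵥ circ sE tE w (Ldag *ᵥ σ₁) (Ldag *ᵥ σ₂))) := by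
  have hθ : ∀ e, 0 < ρ (sE e) + ρ (tE e) := fun e => add_pos (hρ _) (hρ _)
  have hD : ∀ c : ℝ, gradMat sE tE w *ᵥ (fun _ => c) = 0 := fun c =>
    gradMat_mulVec_eq_zero_of_Lw_mulVec_eq_zero sE tE w hθ ((hker _).2 ⟨c, fun _ => rfl⟩)
  have hn : n ≠ 0 := by rintro rfl; simp at hsum
  have hσ₁ : σ₁ ⬝ᵥ onesVec n = 0 := by simp [onesVec, dotProduct, ← Finset.sum_mul, h1]
  have hpair : (fun t : ℝ => σ₁ ⬝ᵥ (Gdir t *ᵥ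
      (Lw sE tE w (ρ + t • σ₂) *ᵥ dF (ρ + t • σ₂)))) =ᶠ[nhds 0]
      fun t => σ₁ ⬝ᵥ dF (ρ + t • σ₂) := by
    filter_upwards [Metric.ball_mem_nhds (0 : ℝ) hε] with t ht
    exact dotProduct_mulVec_Lw_mulVec_of_mul_eq_one sE tE w
      (hGdir t (by simpa using ht)).1 (hD _) (onesVec_dotProduct_self hn) hσ₁ _
  have hpinv_cancel : ∀ x : Fin n → ℝ, ∑ i, x i = 0 →
      x ⬝ᵥ (Ldag *ᵥ (Lw sE tE w ρ *ᵥ dF ρ)) = x ⬝ᵥ dF ρ := fun x hx =>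
    dotProduct_mulVec_mulVec_of_mul_mul_eq_self hpinv.1 (fun v hv => (hker v).1 hv) hx _
  have hLw_zero_sum := sum_Lw_mulVec_eq_zero sE tE w (hD 1)
  rw [hpair.deriv_eq, (hH.const_dotProduct σ₁).deriv, add_dotProduct, smul_dotProduct,
    smul_dotProduct, add_dotProduct, hpinv_cancel _ (hLw_zero_sum _ _), hpinv_cancel _ (hLw_zero_sum _ _),
    hpinv_cancel _ (hLw_zero_sum _ _)]
  simp only [dotProduct_comm (dF ρ), smul_eq_mul]
  ring

/-- Hessian operator identity: the Riemannian Hessian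
`Hess_W F(σ₁,σ₂) = σ₂(g_W(σ₁,∇_WF)) − g_W(∇^W_{σ₂}σ₁, ∇_WF)` equals
`σ₁ᵀ d²F σ₂ + (1/2){dFᵀL(σ₁)L^†σ₂ + dFᵀL(σ₂)L^†σ₁ − dFᵀL(ρ)(∇L^†σ₁∘∇L^†σ₂)}`. -/
theorem wasserstein_hessian_identity
    {n : ℕ} {E : Type} [Fintype E] [DecidableEq E]
    (sE tE : E → Fin n) (w : E → ℝ)
    (hw : ∀ e, 0 < w e)
    (hconn : ∀ Φ : Fin n → ℝ, (∀ e, Φ (sE e) = Φ (tE e)) → ∀ i j, Φ i = Φ j)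
    (ρ : Fin n → ℝ) (hρ : ∀ i, 0 < ρ i) (hsum : ∑ i, ρ i = 1)
    (Ldag : Matrix (Fin n) (Fin n) ℝ) (hpinv : IsPInv (Lw sE tE w ρ) Ldag)
    (hker : ∀ Φ : Fin n → ℝ, Lw sE tE w ρ *ᵥ Φ = 0 ↔ ∃ c : ℝ, ∀ i, Φ i = c)
    (F : (Fin n → ℝ) → ℝ) (hF : ContDiff ℝ 2 F)
    (dF : (Fin n → ℝ) → Fin n → ℝ) (hdFsm : ContDiff ℝ 1 dF)
    (hdF : ∀ μ : Fin n → ℝ, ∀ i : Fin n,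
      HasDerivAt (fun s => F (Function.update μ i s)) (dF μ i) (μ i))
    (σ₁ σ₂ : Fin n → ℝ) (h1 : ∑ i, σ₁ i = 0) (h2 : ∑ i, σ₂ i = 0)
    (H : Matrix (Fin n) (Fin n) ℝ) (hHsym : H.IsSymm)
    -- H is the Euclidean Hessian of F at ρ: the derivative of dF in direction σ₂ is Hσ₂
    (hH : HasDerivAt (fun t : ℝ => dF (ρ + t • σ₂)) (H *ᵥ σ₂) 0)
    (Gdir : ℝ → Matrix (Fin n) (Fin n) ℝ) (ε : ℝ) (hε : 0 < ε)
    -- Gdir t = g(ρ + tσ₂) is the inverse of L(ρ+tσ₂)+u₀u₀ᵀ, i.e. L(ρ+tσ₂)^†+u₀u₀ᵀ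
    (hGdir : ∀ t : ℝ, |t| < ε →
      Gdir t * (Lw sE tE w (ρ + t • σ₂) + vecMulVec (onesVec n) (onesVec n)) = 1 ∧
      (Lw sE tE w (ρ + t • σ₂) + vecMulVec (onesVec n) (onesVec n)) * Gdir t = 1) :
    -- Hess_W F(σ₁,σ₂) = σ₂(g_W(σ₁,∇_WF)) − g_W(∇^W_{σ₂}σ₁, ∇_WF)
    deriv (fun t : ℝ => σ₁ ⬝ᵥ (Gdir t *ᵥ
        (Lw sE tE w (ρ + t • σ₂) *ᵥ dF (ρ + t • σ₂)))) 0 -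
      (-(1/2 : ℝ) • (Lw sE tE w σ₂ *ᵥ (Ldag *ᵥ σ₁) + Lw sE tE w σ₁ *ᵥ (Ldag *ᵥ σ₂)) +
        (1/2 : ℝ) • (Lw sE tE w ρ *ᵥ circ sE tE w (Ldag *ᵥ σ₁) (Ldag *ᵥ σ₂)))
        ⬝ᵥ (Ldag *ᵥ (Lw sE tE w ρ *ᵥ dF ρ)) =
    σ₁ ⬝ᵥ (H *ᵥ σ₂) +
      (1/2 : ℝ) * (dF ρ ⬝ᵥ (Lw sE tE w σ₁ *ᵥ (Ldag *ᵥ σ₂)) +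
        dF ρ ⬝ᵥ (Lw sE tE w σ₂ *ᵥ (Ldag *ᵥ σ₁)) -
        dF ρ ⬝ᵥ (Lw sE tE w ρ *ᵥ circ sE tE w (Ldag *ᵥ σ₁) (Ldag *ᵥ σ₂))) :=
  wasserstein_hessian_identity_general sE tE w ρ hρ hsum Ldag hpinv hker dF σ₁ σ₂ h1 H hH Gdir ε hε
    hGdir
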